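/- Fix η ∈ Ω_ℓ and sites x, y ∈ [−ℓ,ℓ]^d with x ∼ y such that c_{xy}(η) = 1. Then BP^∞(η) = BP^∞(η^{xy}). -/
import Mathlib


open MeasureTheory ENNReal

noncomputable section

namespace KA

open scoped Classical

/-- Sites of the lattice `ℤ^d`. -/
abbrev Site (d : ℕ) := Fin d → ℤ

/-- A configuration: `true` = occupied, `false` = empty. -/
abbrev Config (d : ℕ) := Site d → Bool

variable {d : ℕ}

def origin : Site d := fun _ => 0

def eVec (d : ℕ) (i : Fin d) : Site d := fun j => if j = i then 1 else 0

/-- Nearest neighbours in `ℤ^d`. -/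
def adj (x y : Site d) : Prop := (∑ i, |x i - y i|) = 1

/-- The set of (at most `2d`) nearest neighbours of a site. -/
def neighbors (x : Site d) : Finset (Site d) :=
  Finset.image (fun p : Fin d × Bool =>
    Function.update x p.1 (x p.1 + if p.2 then 1 else -1)) Finset.univ

/-- The Kob-Andersen kinetic constraint `c_{xy}` for parameter `k`:
`x` has at least `k-1` empty neighbours other than `y`, and vice versa. -/
def constraint (k : ℕ) (η : Config d) (x y : Site d) : Prop :=
  k - 1 ≤ ((neighbors x).filter fun z => z ≠ y ∧ η z = false).card ∧
  k - 1 ≤ ((neighbors y).filter fun z => z ≠ x ∧ η z = false).card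

/-- `c_{xy}(η)` as a `{0,1}`-valued quantity. -/
def cval (k : ℕ) (η : Config d) (x y : Site d) : ℝ≥0∞ :=
  if constraint k η x y then 1 else 0

/-- `η^{xy}` : the configuration with the values at `x` and `y` exchanged. -/
def swap (η : Config d) (x y : Site d) : Config d :=
  fun z => if z = x then η y else if z = y then η x else η z

/-- `(τ_y η)(z) = η (z - y)`. -/
def shift (y : Site d) (η : Config d) : Config d := fun z => η (z - y)

/-- A local function depends on finitely many coordinates. -/
def IsLocal (f : Config d → ℝ) : Prop :=
  ∃ S : Finset (Site d), ∀ η η' : Config d, (∀ x ∈ S, η x = η' x) → f η = f η'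

def dotZ (u : Fin d → ℝ) (y : Site d) : ℝ := ∑ i, u i * (y i : ℝ)

/-- The environment part `Σ_{x ≠ 0} Σ_{y ∼ x} c_{xy} (f(η^{xy}) - f(η))²`. -/
def envTerm (k : ℕ) (f : Config d → ℝ) (η : Config d) : ℝ≥0∞ :=
  ∑' p : Site d × Site d,
    if p.1 ≠ origin ∧ adj p.1 p.2 then
      cval k η p.1 p.2 * ENNReal.ofReal ((f (swap η p.1 p.2) - f η) ^ 2)
    else 0

/-- The tagged-particle part `Σ_{y ∼ 0} c_{0y} (u·y + f(τ_y η^{0y}) - f(η))²`. -/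
def tagTerm (k : ℕ) (u : Fin d → ℝ) (f : Config d → ℝ) (η : Config d) : ℝ≥0∞ :=
  ∑' y : Site d,
    if adj origin y then
      cval k η origin y *
        ENNReal.ofReal ((dotZ u y + f (shift y (swap η origin y)) - f η) ^ 2)
    else 0

/-- The variational (Dirichlet) functional `E_u(f)` integrated against `μ₀`. -/
def energy (k : ℕ) (u : Fin d → ℝ) (μ0 : Measure (Config d)) (f : Config d → ℝ) : ℝ≥0∞ :=
  ∫⁻ η, envTerm k f η + tagTerm k u f η ∂μ0

/-- `μ` is the Bernoulli product measure where each site is independently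
occupied with probability `1 - q`. -/
def IsBernoulliProduct (q : ℝ) (μ : Measure (Config d)) : Prop :=
  IsProbabilityMeasure μ ∧
  ∀ (S : Finset (Site d)) (ζ : Site d → Bool),
    μ {η | ∀ x ∈ S, η x = ζ x} = ∏ x ∈ S, ENNReal.ofReal (if ζ x then 1 - q else q)

/-- `μ₀ = μ(· | η(0) = 1)`. -/
def condOcc (μ : Measure (Config d)) : Measure (Config d) :=
  ProbabilityTheory.cond μ {η | η origin = true}

/-- The first standard basis vector of `ℝ^d`. -/
def e1R (d : ℕ) : Fin d → ℝ := fun i => if (i : ℕ) = 0 then 1 else 0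

def basisR (d : ℕ) (i : Fin d) : Fin d → ℝ := fun j => if j = i then 1 else 0

/-- The quadratic form `u ↦ inf over local f of E_u(f)`. -/
def Qform (k : ℕ) (μ : Measure (Config d)) (u : Fin d → ℝ) : ℝ≥0∞ :=
  ⨅ f : {f : Config d → ℝ // IsLocal f}, energy k u (condOcc μ) f.1

/-- The self-diffusion coefficient `D(q) = inf_f E_{e₁}(f)`. -/
def diffCoeff (k : ℕ) (μ : Measure (Config d)) : ℝ≥0∞ := Qform k μ (e1R d)

/-- `expIter n` is the `n`-fold iterated exponential. -/
def expIter : ℕ → ℝ → ℝ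
  | 0, x => x
  | n + 1, x => Real.exp (expIter n x)

/-! ### Frameability, goodness, block-connectedness -/

/-- Fill every site outside `V` with a particle. -/
def fillOutside (V : Set (Site d)) (η : Config d) : Config d :=
  fun z => if z ∈ V then η z else true

/-- A single legal KA-`k`f transition inside `V`. -/
def KAStep (k : ℕ) (V : Set (Site d)) (η η' : Config d) : Prop :=
  ∃ x y, adj x y ∧ x ∈ V ∧ y ∈ V ∧ η x ≠ η y ∧ constraint k η x y ∧ η' = swap η x y

/-- A generalized box with minimal corner `a`, spanning the directions in `E`,
with side length `m` (coordinates outside `E` are frozen at `a`). -/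
def genBox (a : Site d) (E : Finset (Fin d)) (m : ℕ) : Set (Site d) :=
  {x | ∀ i, (i ∈ E → a i ≤ x i ∧ x i < a i + m) ∧ (i ∉ E → x i = a i)}

/-- The `k'`-th frame of the generalized box: the union of all of its
`(k'-1)`-dimensional slices passing through the minimal corner. -/
def genFrame (k' : ℕ) (a : Site d) (E : Finset (Fin d)) (m : ℕ) : Set (Site d) :=
  {x | x ∈ genBox a E m ∧ (E.filter fun i => x i ≠ a i).card ≤ k' - 1}

/-- The generalized box is frameable for `η` : `η` (with the outside filled by
particles) is connected by legal KA-`k'`f transitions inside the box to a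
configuration whose `k'`-th frame is empty. -/
def Frameable (k' : ℕ) (a : Site d) (E : Finset (Fin d)) (m : ℕ) (η : Config d) : Prop :=
  ∃ η', Relation.ReflTransGen (KAStep k' (genBox a E m)) (fillOutside (genBox a E m) η) η' ∧
    ∀ x ∈ genFrame k' a E m, η' x = false

def one (d : ℕ) : Site d := fun _ => 1

/-- minimal corner of the box `b + [m]^d`. -/
def corner (b : Site d) : Site d := fun i => b i + 1

/-- All codimension-one slices of the generalized box are `(k'-1)`-frameable,
for every configuration differing from `η` in at most one site. -/
def SlicesOK (k' : ℕ) (a : Site d) (E : Finset (Fin d)) (m : ℕ) (η : Config d) : Prop :=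
  ∀ η' : Config d, {x | η' x ≠ η x}.Subsingleton →
    ∀ i ∈ E, ∀ t : ℕ, t < m →
      Frameable (k' - 1) (Function.update a i (a i + t)) (E.erase i) m η'

/-- A good box: all codimension-one slices frameable (robustly to one spin flip),
with one extra empty site in addition to the ones required. -/
def GoodBox (k' : ℕ) (a : Site d) (E : Finset (Fin d)) (m : ℕ) (η : Config d) : Prop :=
  SlicesOK k' a E m η ∧
  ∃ x₀ ∈ genBox a E m, η x₀ = false ∧ SlicesOK k' a E m (Function.update η x₀ true)

/-- The length scale `ℓ = ℓ(q)`. -/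
def lscale (d k : ℕ) (c q : ℝ) : ℕ :=
  if k = 2 then ⌈c * Real.log (1 / q) * q ^ (-(1 : ℝ) / ((d : ℝ) - 1))⌉₊
  else ⌈c * expIter (k - 2) (q ^ (-(1 : ℝ) / ((d : ℝ) - (k : ℝ) + 1)))⌉₊

/-- The length scale `L = q^{-cℓ}`. -/
def Lscale (q c : ℝ) (ℓ : ℕ) : ℕ := ⌈q ^ (-(c * (ℓ : ℝ)))⌉₊

/-- One step between adjacent boxes: the base point moves by `±ℓ e_i`. -/
def pathStep (ℓ : ℕ) (b b' : Site d) : Prop :=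
  ∃ i : Fin d, ∃ s : Bool,
    b' = fun j => b j + if j = i then (if s then (ℓ : ℤ) else -(ℓ : ℤ)) else 0

/-- A `(d,k)`-super-good path of boxes of side `ℓ` inside the block `v + [L]^d`,
joining `v + [ℓ]^d` to `v + (L-ℓ)e_α + [ℓ]^d`, of length at most `3L`:
all boxes good and at least one frameable. -/
def SuperGoodPath (k ℓ L : ℕ) (v : Site d) (α : Fin d) (η : Config d) : Prop :=
  ∃ n : ℕ, n ≤ 3 * L ∧ ∃ b : ℕ → Site d,
    b 0 = v ∧
    (b n = fun j => v j + if j = α then (L : ℤ) - (ℓ : ℤ) else 0) ∧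
    (∀ m < n, pathStep ℓ (b m) (b (m + 1))) ∧
    (∀ m ≤ n, genBox (corner (b m)) Finset.univ ℓ ⊆ genBox (corner v) Finset.univ L) ∧
    (∀ m ≤ n, GoodBox k (corner (b m)) Finset.univ ℓ η) ∧
    (∃ m ≤ n, Frameable k (corner (b m)) Finset.univ ℓ η)

/-- minimal corner of the external face of the box `genBox a univ m` in
direction `j`, on the positive (`s = true`) or negative side. -/
def faceBase (a : Site d) (m : ℕ) (j : Fin d) (s : Bool) : Site d :=
  Function.update a j (if s then a j + m else a j - 1)

/-- The face `F` is adjacent to the vertex `v`. -/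
def FaceNear (v : Site d) (F : Set (Site d)) : Prop := ∃ x ∈ F, ∀ i, |x i - v i| ≤ 1

/-- All `(d-1)`-dimensional external faces of the box `genBox a univ m` that are
adjacent to the vertex `v` are `(d-1, k-1)`-good. -/
def GoodFacesAt (k : ℕ) (a : Site d) (m : ℕ) (v : Site d) (η : Config d) : Prop :=
  ∀ (j : Fin d) (s : Bool),
    FaceNear v (genBox (faceBase a m j s) (Finset.univ.erase j) m) →
    GoodBox (k - 1) (faceBase a m j s) (Finset.univ.erase j) m η

/-- The coarse vertices `v` and `v + (L+1)e_α` are `(d,k)`-block-connected. -/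
def BlockConnected (k ℓ L : ℕ) (v : Site d) (α : Fin d) (η : Config d) : Prop :=
  SuperGoodPath k ℓ L v α η ∧
  GoodFacesAt k (corner v) ℓ v η ∧
  GoodFacesAt k (corner (fun j => v j + if j = α then (L : ℤ) - (ℓ : ℤ) else 0)) (ℓ + 1)
    (fun j => v j + if j = α then (L : ℤ) + 1 else 0) η

/-! ### `T`-step moves -/

/-- A `T`-step move with domain determined by the set of configurations `M`,
whose transitions are legal KA-`k`f transitions contained in `V`,
keeping track of the position of a marked particle. -/
structure TStepMove (d k : ℕ) (M : Set (Config d)) (V : Set (Site d)) (T : ℕ) where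
  conf : Config d → ℕ → Config d
  pos : Config d → Site d → ℕ → Site d
  conf_zero : ∀ η ∈ M, conf η 0 = η
  pos_zero : ∀ η ∈ M, ∀ z : Site d, η z = true → pos η z 0 = z
  step : ∀ η ∈ M, ∀ z : Site d, η z = true → ∀ t < T,
    (conf η (t + 1) = conf η t ∧ pos η z (t + 1) = pos η z t) ∨
    ∃ x y, adj x y ∧ x ∈ V ∧ y ∈ V ∧ conf η t x = true ∧ conf η t y = false ∧
      constraint k (conf η t) x y ∧ conf η (t + 1) = swap (conf η t) x y ∧
      pos η z (t + 1) = if pos η z t = x then y else pos η z t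

/-- `Loss(M) ≤ K` : at every step, at most `2^K` configurations of the domain
have a common image. -/
def LossBoundedBy {d k : ℕ} {M : Set (Config d)} {V : Set (Site d)} {T : ℕ}
    (mv : TStepMove d k M V T) (K : ℝ) : Prop :=
  ∀ t < T, ∀ η' ∈ M, ∃ S : Finset (Config d),
    {η ∈ M | mv.conf η t = mv.conf η' t ∧ mv.conf η (t + 1) = mv.conf η' (t + 1)} ⊆ ↑S ∧
    (S.card : ℝ) ≤ (2 : ℝ) ^ K

/-! ### Bond configurations on the coarse lattice -/

/-- A bond configuration on the coarse lattice: the edge `(i, α)` joins the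
coarse vertices of index `i` and `i + e_α`. -/
abbrev BondConfig (d : ℕ) := (Site d × Fin d) → Bool

def IsLocalBond (g : BondConfig d → ℝ) : Prop :=
  ∃ S : Finset (Site d × Fin d), ∀ ω ω' : BondConfig d, (∀ e ∈ S, ω e = ω' e) → g ω = g ω'

/-- Translation of a bond configuration by a coarse index vector. -/
def bondShift (v : Site d) (ω : BondConfig d) : BondConfig d := fun e => (ω (e.1 - v, e.2))

/-- Two coarse indices joined by an open bond. -/
def bondRel (ω : BondConfig d) (i j : Site d) : Prop :=
  (∃ α, j = i + eVec d α ∧ ω (i, α) = true) ∨ (∃ α, i = j + eVec d α ∧ ω (j, α) = true)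

/-- The event `{0 ↔ ∞}`: the origin lies in an infinite open cluster. -/
def InfiniteCluster : Set (BondConfig d) :=
  {ω | {j : Site d | Relation.ReflTransGen (bondRel ω) origin j}.Infinite}

/-- The coarse index of the neighbour `± e_α` of the coarse origin. -/
def coarseIdx (d : ℕ) (α : Fin d) (s : Bool) : Site d :=
  if s then eVec d α else -(eVec d α)

/-- The actual lattice vector `±(L+1) e_α` of a coarse neighbour of the origin. -/
def coarseVecZ (d L : ℕ) (α : Fin d) (s : Bool) : Site d :=
  fun j => ((L : ℤ) + 1) * coarseIdx d α s j

/-- Indicator of the bond between the coarse origin and its neighbour `± e_α`. -/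
def edgeInd (ω : BondConfig d) (α : Fin d) (s : Bool) : ℝ≥0∞ :=
  if (if s then ω (origin, α) else ω (-(eVec d α), α)) = true then 1 else 0

/-- The auxiliary quadratic form `u ↦ u ⬝ D_aux u`. -/
def QauxForm (d L : ℕ) (μstar : Measure (BondConfig d)) (u : Fin d → ℝ) : ℝ≥0∞ :=
  ⨅ g : {g : BondConfig d → ℝ // IsLocalBond g},
    ∑ α : Fin d, ∑ s : Bool,
      ∫⁻ ω, edgeInd ω α s *
        ENNReal.ofReal (((if s then (1 : ℝ) else -1) * ((L : ℝ) + 1) * u α +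
          g.1 (bondShift (coarseIdx d α s) ω) - g.1 ω) ^ 2) ∂μstar

/-- Indicator (on microscopic configurations) that the coarse origin and its
neighbour `± e_α` are block-connected, for an abstract notion `BC`. -/
def microEdgeInd (BC : Site d → Fin d → Config d → Bool) (α : Fin d) (s : Bool)
    (η : Config d) : ℝ≥0∞ :=
  if (if s then BC origin α η else BC (-(eVec d α)) α η) = true then 1 else 0

/-- The microscopic comparison form
`u ↦ inf_f Σ_{i ∼ 0} μ₀[ η̄_{0i} (u·i + f(τ_i η^{0,i}) - f(η))² ]`. -/
def microForm (d k L : ℕ) (BC : Site d → Fin d → Config d → Bool)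
    (μ0 : Measure (Config d)) (u : Fin d → ℝ) : ℝ≥0∞ :=
  ⨅ f : {f : Config d → ℝ // IsLocal f},
    ∑ α : Fin d, ∑ s : Bool,
      ∫⁻ η, microEdgeInd BC α s η *
        ENNReal.ofReal (((if s then (1 : ℝ) else -1) * ((L : ℝ) + 1) * u α +
          f.1 (shift (coarseVecZ d L α s) (swap η origin (coarseVecZ d L α s))) - f.1 η) ^ 2)
        ∂μ0

/-! ### d = 2 geometry -/

/-- The column `y + {c} × [ℓ]` in `ℤ²`. -/
def col2 (y : Site 2) (c : ℤ) (ℓ : ℕ) : Set (Site 2) :=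
  {x | x 0 = y 0 + c ∧ y 1 + 1 ≤ x 1 ∧ x 1 ≤ y 1 + ℓ}

/-- The box `b + [ℓ]²`. -/
def box2 (b : Site 2) (ℓ : ℕ) : Set (Site 2) := genBox (corner b) Finset.univ ℓ

/-- `S` contains at least two empty sites. -/
def TwoEmptyIn (S : Set (Site 2)) (η : Config 2) : Prop :=
  ∃ a ∈ S, ∃ b ∈ S, a ≠ b ∧ η a = false ∧ η b = false

/-- Every row and every column of the box `b + [ℓ]²` contains at least two
empty sites. -/
def RowsColsOK (b : Site 2) (ℓ : ℕ) (η : Config 2) : Prop :=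
  (∀ t : ℕ, 1 ≤ t → t ≤ ℓ → TwoEmptyIn {z | z ∈ box2 b ℓ ∧ z 1 = b 1 + t} η) ∧
  (∀ t : ℕ, 1 ≤ t → t ≤ ℓ → TwoEmptyIn {z | z ∈ box2 b ℓ ∧ z 0 = b 0 + t} η)

/-- The box `b + [ℓ]²` is `(2,2)`-good: two empty sites in every row and
column, plus one additional empty site. -/
def Good22 (b : Site 2) (ℓ : ℕ) (η : Config 2) : Prop :=
  RowsColsOK b ℓ η ∧
  ∃ w ∈ box2 b ℓ, η w = false ∧ RowsColsOK b ℓ (Function.update η w true)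

/-! ### Bootstrap percolation -/

/-- The box `[-ℓ, ℓ]^d`. -/
def bigBox (d ℓ : ℕ) : Set (Site d) := {x | ∀ i, |x i| ≤ (ℓ : ℤ)}

/-- One step of `k`-neighbour bootstrap percolation on `[-ℓ,ℓ]^d` (sites
outside the box are left unchanged). -/
def BPstep (k ℓ : ℕ) (η : Config d) : Config d := fun x =>
  if x ∈ bigBox d ℓ then
    (if η x = true ∧
        ((neighbors x).filter fun z => z ∈ bigBox d ℓ ∧ η z = false).card < k
      then true else false)
  else η x

/-- The limiting configuration of bootstrap percolation. -/
def BPinf (k ℓ : ℕ) (η : Config d) : Config d := fun x =>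
  if ∀ t : ℕ, (BPstep k ℓ)^[t] η x = true then true else false

/-- One step along the bootstrap percolation cluster. -/
def bpRel (k ℓ : ℕ) (η : Config d) (a b : Site d) : Prop :=
  adj a b ∧ b ∈ bigBox d ℓ ∧ BPinf k ℓ η b = false

/-- The bootstrap percolation cluster of the origin. -/
def bpCluster (k ℓ : ℕ) (η : Config d) : Set (Site d) :=
  {x | Relation.ReflTransGen (bpRel k ℓ η) origin x}

def coord0 (x : Site d) : ℤ := if h : 0 < d then x ⟨0, h⟩ else 0

/-- The first coordinate of the rightmost site of the bootstrap percolation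
cluster of the origin. -/
def bpRightmost (k ℓ : ℕ) (η : Config d) : ℝ :=
  sSup ((fun x : Site d => (coord0 x : ℝ)) '' bpCluster k ℓ η)

/-- The test function `f`, computed on the restriction to `[-ℓ,ℓ]^d`. -/
def fTest (d k ℓ : ℕ) (η : Config d) : ℝ :=
  bpRightmost k ℓ (fillOutside (bigBox d ℓ) η)

/-- The event `B` : the bootstrap percolation cluster of the origin contains a
site of `ℓ^∞`-norm at least `ℓ - 1`. -/
def Bevent (k ℓ : ℕ) (η : Config d) : Prop :=
  ∃ x ∈ bpCluster k ℓ η, ∃ i, (ℓ : ℤ) - 1 ≤ |x i|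

/-! ### Auxiliary lemmas for Statement 13 -/

lemma adj_symm' {x y : Site d} (h : adj x y) : adj y x := by
  unfold adj at *
  rw [← h]
  exact Finset.sum_congr rfl fun i _ => abs_sub_comm _ _

lemma adj_exists {x y : Site d} (h : adj x y) :
    ∃ i : Fin d, (y i = x i + 1 ∨ y i = x i - 1) ∧ ∀ j, j ≠ i → y j = x j := by
  unfold adj at h
  have hnz : ∃ i ∈ Finset.univ, |x i - y i| ≠ 0 := by
    by_contra hc
    push_neg at hc
    rw [Finset.sum_eq_zero (fun i hi => hc i hi)] at h
    omega
  obtain ⟨i, -, hi⟩ := hnz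
  have hsum : |x i - y i| + ∑ j ∈ Finset.univ.erase i, |x j - y j| = 1 :=
    (Finset.add_sum_erase _ (fun j => |x j - y j|) (Finset.mem_univ i)).trans h
  have hrest0 : (0 : ℤ) ≤ ∑ j ∈ Finset.univ.erase i, |x j - y j| :=
    Finset.sum_nonneg fun j _ => abs_nonneg _
  have habs0 : (0 : ℤ) ≤ |x i - y i| := abs_nonneg _
  have hone : |x i - y i| = 1 := by omega
  have hrest : ∑ j ∈ Finset.univ.erase i, |x j - y j| = 0 := by omega
  refine ⟨i, ?_, ?_⟩
  · rcases (abs_eq (by norm_num : (0:ℤ) ≤ 1)).1 hone with h1 | h1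
    · right; omega
    · left; omega
  · intro j hj
    have := (Finset.sum_eq_zero_iff_of_nonneg fun z _ => abs_nonneg (x z - y z)).1 hrest j
      (Finset.mem_erase.2 ⟨hj, Finset.mem_univ j⟩)
    have := abs_eq_zero.1 this
    omega

lemma ne_of_adj {x y : Site d} (h : adj x y) : x ≠ y := by
  obtain ⟨i, hi, -⟩ := adj_exists h
  intro hxy
  subst hxy
  omega

lemma mem_neighbors_of_adj {x y : Site d} (h : adj x y) : y ∈ neighbors x := by
  obtain ⟨i, hi, hj⟩ := adj_exists h
  unfold neighbors
  simp only [Finset.mem_image, Finset.mem_univ, true_and]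
  rcases hi with hi | hi
  · refine ⟨(i, true), ?_⟩
    funext j
    by_cases hji : j = i
    · subst hji; simp [Function.update_self, hi]
    · simp [Function.update_apply, hji, hj j hji]
  · refine ⟨(i, false), ?_⟩
    funext j
    by_cases hji : j = i
    · subst hji; simp [Function.update_self, hi]; omega
    · simp [Function.update_apply, hji, hj j hji]

lemma self_notMem_neighbors (x : Site d) : x ∉ neighbors x := by
  unfold neighbors
  simp only [Finset.mem_image, Finset.mem_univ, true_and]
  rintro ⟨⟨i, s⟩, h⟩
  have := congrFun h i
  simp [Function.update_self] at this
  cases s <;> simp at this <;> omega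

lemma ne_of_mem_neighbors {x w : Site d} (h : w ∈ neighbors x) : w ≠ x :=
  fun hwx => self_notMem_neighbors x (hwx ▸ h)

lemma swap_fst (η : Config d) (x y : Site d) : swap η x y x = η y := by simp [swap]

lemma swap_snd (η : Config d) {x y : Site d} (hxy : x ≠ y) : swap η x y y = η x := by
  simp [swap, Ne.symm hxy]

lemma swap_other (η : Config d) {x y z : Site d} (hzx : z ≠ x) (hzy : z ≠ y) :
    swap η x y z = η z := by simp [swap, hzx, hzy]

lemma swap_swap (η : Config d) {x y : Site d} (hxy : x ≠ y) :
    swap (swap η x y) x y = η := by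
  funext z
  by_cases hzx : z = x
  · subst hzx; rw [swap_fst, swap_snd _ hxy]
  · by_cases hzy : z = y
    · subst hzy; rw [swap_snd _ hxy, swap_fst]
    · rw [swap_other _ hzx hzy, swap_other _ hzx hzy]

lemma constraint_swap {k : ℕ} {η : Config d} {x y : Site d} (hxy : x ≠ y)
    (hc : constraint k η x y) : constraint k (swap η x y) x y := by
  unfold constraint at *
  have h1 : ((neighbors x).filter fun z => z ≠ y ∧ swap η x y z = false) =
      ((neighbors x).filter fun z => z ≠ y ∧ η z = false) := by
    apply Finset.filter_congr
    intro z hz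
    constructor
    · rintro ⟨hzy, hzf⟩
      exact ⟨hzy, by rwa [swap_other _ (ne_of_mem_neighbors hz) hzy] at hzf⟩
    · rintro ⟨hzy, hzf⟩
      exact ⟨hzy, by rwa [swap_other _ (ne_of_mem_neighbors hz) hzy]⟩
  have h2 : ((neighbors y).filter fun z => z ≠ x ∧ swap η x y z = false) =
      ((neighbors y).filter fun z => z ≠ x ∧ η z = false) := by
    apply Finset.filter_congr
    intro z hz
    constructor
    · rintro ⟨hzx, hzf⟩
      exact ⟨hzx, by rwa [swap_other _ hzx (ne_of_mem_neighbors hz)] at hzf⟩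
    · rintro ⟨hzx, hzf⟩
      exact ⟨hzx, by rwa [swap_other _ hzx (ne_of_mem_neighbors hz)]⟩
  rw [h1, h2]
  exact hc

/-- The set of sites that eventually become empty under bootstrap percolation,
as an inductive closure. -/
inductive EvEmpty (k ℓ : ℕ) (η : Config d) : Site d → Prop
  | base (x : Site d) : η x = false → EvEmpty k ℓ η x
  | step (x : Site d) (S : Finset (Site d)) : x ∈ bigBox d ℓ → S ⊆ neighbors x →
      k ≤ S.card → (∀ z ∈ S, z ∈ bigBox d ℓ) → (∀ z ∈ S, EvEmpty k ℓ η z) →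
      EvEmpty k ℓ η x

lemma BPstep_notMem {k ℓ : ℕ} {x : Site d} (hx : x ∉ bigBox d ℓ) (η : Config d) :
    BPstep k ℓ η x = η x := by
  unfold BPstep
  rw [if_neg hx]

lemma BPstep_eq_false_of {k ℓ : ℕ} {η : Config d} {x : Site d} (hx : x ∈ bigBox d ℓ)
    (hn : ¬(η x = true ∧
      ((neighbors x).filter fun z => z ∈ bigBox d ℓ ∧ η z = false).card < k)) :
    BPstep k ℓ η x = false := by
  unfold BPstep
  rw [if_pos hx, if_neg hn]

lemma BPstep_false_cases {k ℓ : ℕ} {η : Config d} {x : Site d}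
    (hx : x ∈ bigBox d ℓ) (h : BPstep k ℓ η x = false) :
    η x = false ∨
      k ≤ ((neighbors x).filter fun z => z ∈ bigBox d ℓ ∧ η z = false).card := by
  by_contra hcon
  push_neg at hcon
  obtain ⟨h1, h2⟩ := hcon
  have ht : BPstep k ℓ η x = true := by
    unfold BPstep
    rw [if_pos hx, if_pos ⟨by simpa using h1, by omega⟩]
  rw [ht] at h
  exact absurd h (by simp)

lemma BPstep_false {k ℓ : ℕ} {η : Config d} {x : Site d} (h : η x = false) :
    BPstep k ℓ η x = false := by
  unfold BPstep
  split_ifs with h1 h2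
  · exact absurd h2.1 (by simp [h])
  · rfl
  · exact h

lemma BPiter_false_mono {k ℓ : ℕ} {η : Config d} {x : Site d} {s t : ℕ} (hst : s ≤ t)
    (h : (BPstep k ℓ)^[s] η x = false) : (BPstep k ℓ)^[t] η x = false := by
  induction t with
  | zero =>
    have : s = 0 := by omega
    subst this; exact h
  | succ n ih =>
    rcases Nat.lt_or_ge s (n + 1) with hlt | hge
    · rw [Function.iterate_succ_apply']
      exact BPstep_false (ih (by omega))
    · have : s = n + 1 := by omega
      subst this; exact h

lemma evEmpty_of_iter (k ℓ : ℕ) (η : Config d) (t : ℕ) :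
    ∀ x, (BPstep k ℓ)^[t] η x = false → EvEmpty k ℓ η x := by
  induction t with
  | zero => intro x h; exact .base x h
  | succ n ih =>
    intro x h
    rw [Function.iterate_succ_apply'] at h
    by_cases hx : x ∈ bigBox d ℓ
    · rcases BPstep_false_cases hx h with hfx | hcard
      · exact ih x hfx
      · exact .step x _ hx (Finset.filter_subset _ _) hcard
          (fun z hz => (Finset.mem_filter.1 hz).2.1)
          (fun z hz => ih z (Finset.mem_filter.1 hz).2.2)
    · rw [BPstep_notMem hx] at h
      exact ih x h

lemma iter_of_evEmpty {k ℓ : ℕ} {η : Config d} {x : Site d} (h : EvEmpty k ℓ η x) :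
    ∃ t, (BPstep k ℓ)^[t] η x = false := by
  induction h with
  | base w hw => exact ⟨0, hw⟩
  | step w S hwbox hS hcard hbox hmem ih =>
    choose! f hf using ih
    refine ⟨S.sup f + 1, ?_⟩
    rw [Function.iterate_succ_apply']
    have hall : ∀ z ∈ S, (BPstep k ℓ)^[S.sup f] η z = false :=
      fun z hz => BPiter_false_mono (Finset.le_sup hz) (hf z hz)
    have hncond : ¬((BPstep k ℓ)^[S.sup f] η w = true ∧
        ((neighbors w).filter fun z =>
          z ∈ bigBox d ℓ ∧ (BPstep k ℓ)^[S.sup f] η z = false).card < k) := by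
      rintro ⟨-, hlt⟩
      have hsub : S ⊆ (neighbors w).filter fun z =>
          z ∈ bigBox d ℓ ∧ (BPstep k ℓ)^[S.sup f] η z = false :=
        fun z hz => Finset.mem_filter.2 ⟨hS hz, hbox z hz, hall z hz⟩
      have := Finset.card_le_card hsub
      omega
    exact BPstep_eq_false_of hwbox hncond

lemma bpinf_false_iff (k ℓ : ℕ) (η : Config d) (x : Site d) :
    BPinf k ℓ η x = false ↔ EvEmpty k ℓ η x := by
  unfold BPinf
  constructor
  · intro h
    split_ifs at h with h1
    push_neg at h1
    obtain ⟨t, ht⟩ := h1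
    exact evEmpty_of_iter k ℓ η t x (by simpa using ht)
  · intro h
    obtain ⟨t, ht⟩ := iter_of_evEmpty h
    rw [if_neg]
    intro hall
    exact absurd (hall t) (by simp [ht])

lemma evEmpty_swap_subset {k ℓ : ℕ} (hk : 2 ≤ k) {η : Config d}
    (hout : ∀ z, z ∉ bigBox d ℓ → η z = true)
    {x y : Site d} (hx : x ∈ bigBox d ℓ) (hy : y ∈ bigBox d ℓ)
    (hadj : adj x y) (hc : constraint k η x y) :
    ∀ w, EvEmpty k ℓ η w → EvEmpty k ℓ (swap η x y) w := by
  have hxy : x ≠ y := ne_of_adj hadj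
  intro w hw
  induction hw with
  | base w hwf =>
    by_cases hwx : w = x
    · subst hwx
      by_cases hyf : η y = false
      · exact .base _ (by rw [swap_fst]; exact hyf)
      · set S0 := (neighbors w).filter (fun z => z ≠ y ∧ η z = false) with hS0
        refine .step w (insert y S0) hx ?_ ?_ ?_ ?_
        · intro z hz
          rcases Finset.mem_insert.1 hz with rfl | hz
          · exact mem_neighbors_of_adj hadj
          · exact Finset.filter_subset _ _ hz
        · have hy0 : y ∉ S0 := fun hz => ((Finset.mem_filter.1 hz).2.1 rfl).elim
          rw [Finset.card_insert_of_notMem hy0]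
          have h1 : k - 1 ≤ S0.card := hc.1
          omega
        · intro z hz
          rcases Finset.mem_insert.1 hz with rfl | hz
          · exact hy
          · by_contra hzb
            have h1 := hout z hzb
            have h2 := (Finset.mem_filter.1 hz).2.2
            simp [h1] at h2
        · intro z hz
          rcases Finset.mem_insert.1 hz with rfl | hz
          · exact .base _ (by rw [swap_snd _ hxy]; exact hwf)
          · obtain ⟨hzn, hzy, hzf⟩ : z ∈ neighbors w ∧ z ≠ y ∧ η z = false := by
              have := Finset.mem_filter.1 hz; exact ⟨this.1, this.2.1, this.2.2⟩
            exact .base _ (by rw [swap_other _ (ne_of_mem_neighbors hzn) hzy]; exact hzf)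
    · by_cases hwy : w = y
      · subst hwy
        by_cases hxf : η x = false
        · exact .base _ (by rw [swap_snd _ hxy]; exact hxf)
        · set S0 := (neighbors w).filter (fun z => z ≠ x ∧ η z = false) with hS0
          refine .step w (insert x S0) hy ?_ ?_ ?_ ?_
          · intro z hz
            rcases Finset.mem_insert.1 hz with rfl | hz
            · exact mem_neighbors_of_adj (adj_symm' hadj)
            · exact Finset.filter_subset _ _ hz
          · have hx0 : x ∉ S0 := fun hz => ((Finset.mem_filter.1 hz).2.1 rfl).elim
            rw [Finset.card_insert_of_notMem hx0]
            have h1 : k - 1 ≤ S0.card := hc.2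
            omega
          · intro z hz
            rcases Finset.mem_insert.1 hz with rfl | hz
            · exact hx
            · by_contra hzb
              have h1 := hout z hzb
              have h2 := (Finset.mem_filter.1 hz).2.2
              simp [h1] at h2
          · intro z hz
            rcases Finset.mem_insert.1 hz with rfl | hz
            · exact .base _ (by rw [swap_fst]; exact hwf)
            · obtain ⟨hzn, hzx, hzf⟩ : z ∈ neighbors w ∧ z ≠ x ∧ η z = false := by
                have := Finset.mem_filter.1 hz; exact ⟨this.1, this.2.1, this.2.2⟩
              exact .base _ (by rw [swap_other _ hzx (ne_of_mem_neighbors hzn)]; exact hzf)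
      · exact .base _ (by rw [swap_other _ hwx hwy]; exact hwf)
  | step w S hwbox hS hcard hbox hmem ih =>
    exact .step w S hwbox hS hcard hbox ih

/-- A legal KA transition does not change the limiting
bootstrap percolation configuration. -/
theorem statement13 (d k ℓ : ℕ) (hd : 2 ≤ d) (hk : 2 ≤ k) (hkd : k ≤ d)
    (η : Config d) (hout : ∀ z : Site d, z ∉ bigBox d ℓ → η z = true)
    (x y : Site d) (hx : x ∈ bigBox d ℓ) (hy : y ∈ bigBox d ℓ)
    (hadj : adj x y) (hc : constraint k η x y) :
    BPinf k ℓ η = BPinf k ℓ (swap η x y) := by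
  have hxy : x ≠ y := ne_of_adj hadj
  have hout' : ∀ z, z ∉ bigBox d ℓ → swap η x y z = true := by
    intro z hz
    have hzx : z ≠ x := fun h => hz (h ▸ hx)
    have hzy : z ≠ y := fun h => hz (h ▸ hy)
    rw [swap_other _ hzx hzy]
    exact hout z hz
  have hc' : constraint k (swap η x y) x y := constraint_swap hxy hc
  have h1 := evEmpty_swap_subset hk hout hx hy hadj hc
  have h2 := evEmpty_swap_subset hk hout' hx hy hadj hc'
  rw [swap_swap η hxy] at h2
  funext w
  have hiff : BPinf k ℓ η w = false ↔ BPinf k ℓ (swap η x y) w = false := by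
    rw [bpinf_false_iff, bpinf_false_iff]
    exact ⟨h1 w, h2 w⟩
  cases hb : BPinf k ℓ η w <;> cases hb' : BPinf k ℓ (swap η x y) w <;> simp_all

end KA
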